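/- Let Γ be a planar graph such that the ordered configuration space F(Γ,2) is path-connected. Then the triple ((S^m, A); Γ) satisfies the Borsuk–Ulam property for every m ≥ 2, and moreover secat(q^Γ : F(Γ,2) → D(Γ,2)) = 2. -/

import Mathlib

open Metric Set

/-- A continuous local section of `p` over `U`. -/
def IsLocalSection {E B : Type*} [TopologicalSpace E] [TopologicalSpace B]
    (p : E → B) (U : Set B) : Prop :=
  ∃ s : U → E, Continuous s ∧ ∀ x : U, p (s x) = (x : B)

/-- The sectional category of a map `p : E → B`: the least number of open sets covering `B`,
over each of which `p` admits a continuous local section; `⊤` if no finite cover exists. -/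
noncomputable def secat {E B : Type*} [TopologicalSpace E] [TopologicalSpace B]
    (p : E → B) : ℕ∞ :=
  sInf {n : ℕ∞ | ∃ k : ℕ, n = (k : ℕ∞) ∧ ∃ U : Fin k → Set B,
    (∀ i, IsOpen (U i)) ∧ (⋃ i, U i) = Set.univ ∧ ∀ i, IsLocalSection p (U i)}

/-- A subset is contractible within the ambient space if its inclusion is nullhomotopic. -/
def ContractibleIn {X : Type*} [TopologicalSpace X] (U : Set X) : Prop :=
  ContinuousMap.Nullhomotopic (⟨(Subtype.val : U → X), continuous_subtype_val⟩ : C(U, X))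

/-- Lusternik–Schnirelmann category: least number of open sets covering `X`, each
contractible within `X`. -/
noncomputable def LScat (X : Type*) [TopologicalSpace X] : ℕ∞ :=
  sInf {n : ℕ∞ | ∃ k : ℕ, n = (k : ℕ∞) ∧ ∃ U : Fin k → Set X,
    (∀ i, IsOpen (U i)) ∧ (⋃ i, U i) = Set.univ ∧ ∀ i, ContractibleIn (U i)}

/-- Hurewicz fibration: the homotopy lifting property with respect to all spaces. -/
def IsHurewiczFibration {E B : Type*} [TopologicalSpace E] [TopologicalSpace B]
    (p : E → B) : Prop :=
  ∀ (Z : Type*) [TopologicalSpace Z] (H : Z × unitInterval → B) (h : Z → E),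
    Continuous H → Continuous h → (∀ z, p (h z) = H (z, 0)) →
    ∃ G : Z × unitInterval → E, Continuous G ∧ (∀ z, G (z, 0) = h z) ∧ ∀ w, p (G w) = H w

/-- The orbit relation of the action generated by a map `τ`. -/
def orbitRelOf {X : Type*} (τ : X → X) : X → X → Prop := fun x y => y = τ x

/-- Quotient of `X` by the (involutive) map `τ`, with the quotient topology. -/
abbrev InvolQuot {X : Type*} [TopologicalSpace X] (τ : X → X) : Type _ := Quot (orbitRelOf τ)

/-- The quotient map `X → X/τ`. -/
def involQuotMk {X : Type*} [TopologicalSpace X] (τ : X → X) : X → InvolQuot τ :=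
  Quot.mk (orbitRelOf τ)

/-- The ordered configuration space `F(Y,2)` of two distinct points of `Y`. -/
abbrev Conf2 (Y : Type*) [TopologicalSpace Y] : Type _ := {p : Y × Y // p.1 ≠ p.2}

/-- The swap involution `τ₂` on `F(Y,2)`. -/
def confSwap {Y : Type*} [TopologicalSpace Y] : Conf2 Y → Conf2 Y :=
  fun p => ⟨(p.1.2, p.1.1), Ne.symm p.2⟩

/-- The unordered configuration space `D(Y,2) = F(Y,2)/τ₂`. -/
abbrev UConf2 (Y : Type*) [TopologicalSpace Y] : Type _ := InvolQuot (confSwap (Y := Y))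

/-- The quotient double covering `q^Y : F(Y,2) → D(Y,2)`. -/
def confQuotMk (Y : Type*) [TopologicalSpace Y] : Conf2 Y → UConf2 Y :=
  involQuotMk confSwap

/-- The Borsuk–Ulam property for the triple `((X,τ);Y)`. -/
def BorsukUlamProperty (X : Type*) [TopologicalSpace X] (τ : X → X)
    (Y : Type*) [TopologicalSpace Y] : Prop :=
  ∀ f : X → Y, Continuous f → ∃ x : X, f (τ x) = f x

/-- The `m`-sphere as the unit sphere of `ℝ^{m+1}`. -/
abbrev Sph (m : ℕ) : Type := Metric.sphere (0 : EuclideanSpace ℝ (Fin (m + 1))) 1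

/-- The antipodal involution on the sphere. -/
noncomputable def antipodal (m : ℕ) : Sph m → Sph m := fun x => -x

/-- The smallest dimension of a Euclidean space into which `Y` embeds. -/
noncomputable def embDim (Y : Type*) [TopologicalSpace Y] : ℕ∞ :=
  sInf {n : ℕ∞ | ∃ k : ℕ, n = (k : ℕ∞) ∧
    ∃ e : Y → EuclideanSpace ℝ (Fin k), Topology.IsEmbedding e}

/-- The `ℤ/2`-index of `(X,τ)`: the least `n` such that there is a continuous map
`X → Sⁿ` which is equivariant for `τ` and the antipodal involution. -/
noncomputable def z2Index {X : Type*} [TopologicalSpace X] (τ : X → X) : ℕ∞ :=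
  sInf {n : ℕ∞ | ∃ k : ℕ, n = (k : ℕ∞) ∧
    ∃ g : X → Sph k, Continuous g ∧ ∀ x, g (τ x) = antipodal k (g x)}

section CW

/-- A (classical) CW-complex structure on a Hausdorff space `X`: a family of cells
with characteristic maps from closed disks, the images of the open disks partitioning `X`,
each attaching map sending the boundary sphere into cells of lower dimension, together with
closure finiteness (C) and the weak topology (W). -/
structure CWStructure (X : Type u) [TopologicalSpace X] : Type (u + 1) where
  /-- index type of the `n`-cells -/
  cell : ℕ → Type u
  /-- characteristic map of each `n`-cell -/
  map : (n : ℕ) → cell n → EuclideanSpace ℝ (Fin n) → X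
  continuousOn : ∀ n i, ContinuousOn (map n i) (closedBall 0 1)
  injOn : ∀ n i, Set.InjOn (map n i) (ball 0 1)
  partition : ∀ x : X, ∃! p : Σ n, cell n, x ∈ map p.1 p.2 '' ball 0 1
  mapsTo_boundary : ∀ n i, Set.MapsTo (map n i) (sphere 0 1)
    (⋃ (m : ℕ) (_ : m < n) (j : cell m), map m j '' closedBall 0 1)
  closureFinite : ∀ n i, {p : Σ m, cell m |
    (map p.1 p.2 '' ball 0 1 ∩ map n i '' closedBall 0 1).Nonempty}.Finite
  weakTopology : ∀ A : Set X,
    (∀ n i, IsClosed (A ∩ map n i '' closedBall 0 1)) → IsClosed A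

namespace CWStructure

variable {X : Type u} [TopologicalSpace X] (S : CWStructure X)

/-- The `n`-skeleton of a CW structure. -/
def skeleton (n : ℕ) : Set X :=
  ⋃ (m : ℕ) (_ : m ≤ n) (j : S.cell m), S.map m j '' closedBall 0 1

/-- The CW structure has dimension at most `d`. -/
def DimLE (d : ℕ) : Prop := ∀ n, d < n → IsEmpty (S.cell n)

/-- The CW structure has dimension exactly `d`. -/
def DimEq (d : ℕ) : Prop := S.DimLE d ∧ Nonempty (S.cell d)

/-- A self-map is cellular if it maps each skeleton into itself. -/
def Cellular (f : X → X) : Prop := ∀ n, Set.MapsTo f (S.skeleton n) (S.skeleton n)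

end CWStructure

/-- The homotopical dimension of `X` is at most `d`: `X` is homotopy equivalent to a
CW complex of dimension at most `d`. -/
def HDimLE (X : Type u) [TopologicalSpace X] (d : ℕ) : Prop :=
  ∃ (Z : Type u) (_ : TopologicalSpace Z) (S : CWStructure Z),
    S.DimLE d ∧ Nonempty (ContinuousMap.HomotopyEquiv Z X)

end CW

/-!
Let `j : Γ → ℂ` be a planar embedding. If `f : Sᵐ → Γ` had no coincidence `f (-x) = f x`, then
`x ↦ j (f (-x)) - j (f x)` would be an odd nowhere-vanishing map `Sᵐ → ℂ`. Pull it back to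
`I × ℝ` along spherical coordinates on a great 2-sphere (colatitude `π s / 2`, longitude `φ`) and
lift it through `exp`, starting from a constant on the pole `s = 0`. Uniqueness of lifts makes the
logarithm return to its value after one turn around the equator `s = 1`, whereas oddness forces
it to change by an odd multiple of `π i` over each half turn.

For `secat`, a coordinate of the plane in which the two points of an unordered configuration
differ orders them, which gives sections over two open sets. A global section `σ` would split the
connected space `F(Γ,2)` into the clopen set `{x | σ (q x) = x}` and its image under the swap.
-/

section InvolutionQuotient

variable {X : Type*} [TopologicalSpace X] {τ : X → X}

theorem involQuotMk_apply_eq (x : X) : involQuotMk τ (τ x) = involQuotMk τ x :=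
  (Quot.sound (show orbitRelOf τ x (τ x) from rfl)).symm

theorem involQuotMk_eq_iff (hτ : Function.Involutive τ) {a b : X} :
    involQuotMk τ a = involQuotMk τ b ↔ b = a ∨ b = τ a := by
  refine ⟨fun h => ?_, ?_⟩
  · have hgen := Quot.eqvGen_exact h
    clear h
    induction hgen with
    | rel x y hxy => exact Or.inr hxy
    | refl => exact Or.inl rfl
    | symm x y _ ih =>
      rcases ih with rfl | rfl
      exacts [Or.inl rfl, Or.inr (hτ x).symm]
    | trans x y z _ _ ihxy ihyz =>
      rcases ihxy with rfl | rfl <;> rcases ihyz with rfl | rfl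
      exacts [Or.inl rfl, Or.inr rfl, Or.inr rfl, Or.inl (hτ x)]
  · rintro (rfl | rfl)
    exacts [rfl, (involQuotMk_apply_eq a).symm]

theorem continuous_involQuotMk : Continuous (involQuotMk τ) := continuous_quot_mk

theorem isOpenMap_involQuotMk (hτ : Function.Involutive τ) (hτc : Continuous τ) :
    IsOpenMap (involQuotMk τ) := by
  intro W hW
  have : involQuotMk τ ⁻¹' (involQuotMk τ '' W) = W ∪ τ ⁻¹' W := by
    ext z
    simp only [mem_preimage, mem_image, mem_union, involQuotMk_eq_iff hτ]
    constructor
    · rintro ⟨w, hw, rfl | rfl⟩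
      exacts [Or.inl hw, Or.inr ((hτ w).symm ▸ hw)]
    · rintro (hz | hz)
      exacts [⟨z, hz, Or.inl rfl⟩, ⟨τ z, hz, Or.inr (hτ z).symm⟩]
  exact isQuotientMap_quot_mk.isOpen_preimage.mp (this ▸ hW.union (hW.preimage hτc))

theorem isLocalSection_involQuotMk_image (hτ : Function.Involutive τ) (hτc : Continuous τ)
    {V : Set X} (hV : IsOpen V) (hVτ : ∀ x ∈ V, τ x ∉ V) :
    IsLocalSection (involQuotMk τ) (involQuotMk τ '' V) := by
  have hinj : Function.Injective (V.domRestrict (involQuotMk τ)) := by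
    rintro ⟨a, ha⟩ ⟨b, hb⟩ h
    rcases (involQuotMk_eq_iff hτ).mp h with h | rfl
    exacts [Subtype.ext h.symm, absurd hb (hVτ a ha)]
  have hemb : Topology.IsOpenEmbedding (V.domRestrict (involQuotMk τ)) :=
    .of_continuous_injective_isOpenMap (continuous_involQuotMk.comp continuous_subtype_val) hinj
      ((isOpenMap_involQuotMk hτ hτc).domRestrict hV)
  let e := hemb.isEmbedding.toHomeomorph
  refine ⟨fun u => e.symm ⟨u, by rw [range_domRestrict]; exact u.2⟩, by fun_prop, fun u => ?_⟩
  exact congrArg Subtype.val (e.apply_symm_apply _)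

theorem not_isLocalSection_involQuotMk_univ [T2Space X] [ConnectedSpace X]
    (hτ : Function.Involutive τ) (hτc : Continuous τ) (hfix : ∀ x, τ x ≠ x) :
    ¬ IsLocalSection (involQuotMk τ) univ := by
  rintro ⟨s, hs, hsec⟩
  let σ : X → X := fun x => s ⟨involQuotMk τ x, trivial⟩
  have hσc : Continuous σ := hs.comp (continuous_involQuotMk.subtype_mk _)
  have hστ : ∀ x, σ (τ x) = σ x := fun x => by simp only [σ, involQuotMk_apply_eq]
  have hσ : ∀ x, σ x = x ∨ σ x = τ x := fun x =>
    (involQuotMk_eq_iff hτ).mp (hsec ⟨involQuotMk τ x, trivial⟩).symm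
  have hA : IsClopen {x | σ x = x} := by
    refine ⟨isClosed_eq hσc continuous_id, ?_⟩
    have : {x | σ x = x} = {x | σ x = τ x}ᶜ := by
      ext x
      rcases hσ x with h | h <;> simp [h, hfix x, (hfix x).symm]
    exact this ▸ (isClosed_eq hσc hτc).isOpen_compl
  have hswap : ∀ x, σ (τ x) = τ x ↔ σ x ≠ x := fun x => by
    rw [hστ]
    rcases hσ x with h | h <;> simp [h, hfix x, (hfix x).symm]
  obtain ⟨x₀⟩ := ‹ConnectedSpace X›.toNonempty
  have hfull : {x | σ x = x} = univ := hA.eq_univ <| by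
    by_cases h : σ x₀ = x₀
    exacts [⟨x₀, h⟩, ⟨τ x₀, (hswap x₀).mpr h⟩]
  have hall := eq_univ_iff_forall.mp hfull
  exact (hswap x₀).mp (hall (τ x₀)) (hall x₀)

end InvolutionQuotient

section SectionalCategory

variable {E B : Type*} [TopologicalSpace E] [TopologicalSpace B] {p : E → B}

theorem secat_le_of_cover {k : ℕ} (U : Fin k → Set B) (hU : ∀ i, IsOpen (U i))
    (hcov : ⋃ i, U i = univ) (hs : ∀ i, IsLocalSection p (U i)) : secat p ≤ k :=
  sInf_le ⟨k, rfl, U, hU, hcov, hs⟩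

theorem two_le_secat [Nonempty B] (hp : ¬ IsLocalSection p univ) : 2 ≤ secat p := by
  refine le_sInf fun _ ⟨k, hk, U, _, hcov, hs⟩ => ?_
  subst hk
  by_contra! hk
  replace hk : k < 2 := by exact_mod_cast hk
  obtain ⟨b⟩ := ‹Nonempty B›
  interval_cases k
  · have hb : b ∈ ⋃ i, U i := hcov ▸ mem_univ b
    simp at hb
  · exact hp ((iSup_unique U).symm.trans hcov ▸ hs default)

end SectionalCategory

section ConfigurationSpace

variable {Y : Type*} [TopologicalSpace Y]

theorem confSwap_involutive : Function.Involutive (confSwap (Y := Y)) := fun _ => rfl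

theorem confSwap_ne (x : Conf2 Y) : confSwap x ≠ x :=
  fun h => x.2 (congrArg (fun z : Conf2 Y => z.1.2) h)

theorem continuous_confSwap : Continuous (confSwap (Y := Y)) := by
  unfold confSwap
  fun_prop

theorem secat_confQuotMk_le_of_injective {n : ℕ} {e : Y → EuclideanSpace ℝ (Fin n)}
    (he : Continuous e) (hinj : Function.Injective e) : secat (confQuotMk Y) ≤ n := by
  let V : Fin n → Set (Conf2 Y) := fun i => {x | e x.1.1 i < e x.1.2 i}
  refine secat_le_of_cover (fun i => confQuotMk Y '' V i) (fun i => ?_) ?_ (fun i => ?_)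
  · exact isOpenMap_involQuotMk confSwap_involutive continuous_confSwap _
      (isOpen_lt (by fun_prop) (by fun_prop))
  · refine eq_univ_of_forall (Quot.ind fun x => ?_)
    obtain ⟨i, hi⟩ : ∃ i, e x.1.1 i ≠ e x.1.2 i := by
      by_contra! h
      exact x.2 (hinj (PiLp.ext h))
    refine mem_iUnion.mpr ⟨i, ?_⟩
    rcases hi.lt_or_gt with h | h
    exacts [⟨x, h, rfl⟩, ⟨confSwap x, h, involQuotMk_apply_eq x⟩]
  · exact isLocalSection_involQuotMk_image confSwap_involutive continuous_confSwap
      (isOpen_lt (by fun_prop) (by fun_prop)) fun x (hx : e x.1.1 i < e x.1.2 i)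
        (hx' : e x.1.2 i < e x.1.1 i) => lt_asymm hx hx'

theorem two_le_secat_confQuotMk [T2Space Y] [ConnectedSpace (Conf2 Y)] :
    2 ≤ secat (confQuotMk Y) :=
  have : Nonempty (UConf2 Y) := ⟨confQuotMk Y (Classical.arbitrary _)⟩
  two_le_secat (not_isLocalSection_involQuotMk_univ confSwap_involutive continuous_confSwap
    confSwap_ne)

end ConfigurationSpace

namespace Complex

open unitInterval

theorem const_of_exp_const {A : Type*} [TopologicalSpace A] [PreconnectedSpace A]
    {d : A → ℂ} (hd : Continuous d) (h : ∀ a a', exp (d a) = exp (d a')) (a a' : A) :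
    d a = d a' :=
  isCoveringMap_exp.const_of_comp hd (fun a a' => Subtype.ext (h a a')) a a'

theorem exists_continuous_log_homotopy {A : Type*} [TopologicalSpace A]
    {G : I × A → ℂ} (hG : Continuous G) (hG0 : ∀ x, G x ≠ 0) {f : A → ℂ} (hf : Continuous f)
    (hfG : ∀ a, exp (f a) = G (0, a)) :
    ∃ L : I × A → ℂ, Continuous L ∧ (∀ x, exp (L x) = G x) ∧ ∀ a, L (0, a) = f a := by
  let L := isCoveringMap_exp.liftHomotopy ⟨fun x => ⟨G x, hG0 x⟩, by fun_prop⟩ ⟨f, hf⟩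
    fun a => Subtype.ext (hfG a).symm
  exact ⟨L, L.continuous,
    fun x => congrArg Subtype.val (congrFun (isCoveringMap_exp.liftHomotopy_lifts ..) x),
    fun a => isCoveringMap_exp.liftHomotopy_zero _ _ _ a⟩

theorem ne_of_exp_antiperiodic {ℓ : ℝ → ℂ} (hℓ : Continuous ℓ) {c : ℝ}
    (h : ∀ t, exp (ℓ (t + c)) = -exp (ℓ t)) : ℓ (2 * c) ≠ ℓ 0 := by
  intro hloop
  have hc : ∀ t, exp (ℓ (t + c) - ℓ t) = -1 := fun t => by
    rw [exp_sub, h, neg_div, div_self (exp_ne_zero _)]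
  have hconst : ℓ (c + c) - ℓ c = ℓ (0 + c) - ℓ 0 :=
    const_of_exp_const (d := fun t => ℓ (t + c) - ℓ t) (by fun_prop)
      (fun a a' => by simp only [hc]) c 0
  have hzero : ℓ c - ℓ 0 = 0 := by
    rw [zero_add] at hconst
    rw [two_mul] at hloop
    linear_combination (hloop - hconst) / 2
  have := hc 0
  rw [zero_add, hzero, exp_zero] at this
  norm_num at this

end Complex

section SphericalCoordinates

open Real Matrix

variable (k : ℕ)

noncomputable def sphericalCoords (θ φ : ℝ) : EuclideanSpace ℝ (Fin (k + 3)) :=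
  WithLp.toLp 2 (vecCons (sin θ * cos φ) (vecCons (sin θ * sin φ) (vecCons (cos θ) 0)))

theorem norm_sphericalCoords (θ φ : ℝ) : ‖sphericalCoords k θ φ‖ = 1 := by
  rw [EuclideanSpace.norm_eq, sqrt_eq_one]
  simp only [sphericalCoords, PiLp.toLp_apply, Fin.sum_univ_succ, cons_val_zero, cons_val_succ,
    Pi.zero_apply, Real.norm_eq_abs, sq_abs, ne_eq, OfNat.ofNat_ne_zero, not_false_eq_true,
    zero_pow, Finset.sum_const_zero, add_zero]
  linear_combination sin θ ^ 2 * sin_sq_add_cos_sq φ + sin_sq_add_cos_sq θ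

noncomputable def sphericalPoint (θ φ : ℝ) : Sph (k + 2) :=
  ⟨sphericalCoords k θ φ, mem_sphere_zero_iff_norm.mpr (norm_sphericalCoords k θ φ)⟩

theorem Continuous.sphericalPoint {X : Type*} [TopologicalSpace X] {θ φ : X → ℝ}
    (hθ : Continuous θ) (hφ : Continuous φ) :
    Continuous fun x => sphericalPoint k (θ x) (φ x) := by
  refine Continuous.subtype_mk ((PiLp.continuous_toLp 2 _).comp (continuous_pi fun i => ?_)) _
  refine Fin.cases ?_ (fun j => Fin.cases ?_ (fun j => Fin.cases ?_ (fun j => ?_) j) j) i <;>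
    simp only [cons_val_zero, cons_val_succ, Pi.zero_apply] <;> fun_prop

theorem sphericalPoint_zero_left (φ : ℝ) : sphericalPoint k 0 φ = sphericalPoint k 0 0 := by
  simp [sphericalPoint, sphericalCoords]

theorem sphericalPoint_two_pi (θ : ℝ) : sphericalPoint k θ (2 * π) = sphericalPoint k θ 0 := by
  simp [sphericalPoint, sphericalCoords]

theorem sphericalPoint_pi_div_two_add_pi (φ : ℝ) :
    sphericalPoint k (π / 2) (φ + π) = -sphericalPoint k (π / 2) φ := by
  ext1
  simp [sphericalPoint, sphericalCoords, ← WithLp.toLp_neg]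

end SphericalCoordinates

open Complex Real unitInterval in
theorem exists_eq_zero_of_odd {m : ℕ} (hm : 2 ≤ m) {g : Sph m → ℂ} (hg : Continuous g)
    (hodd : ∀ x, g (-x) = -g x) : ∃ x, g x = 0 := by
  obtain ⟨k, rfl⟩ := Nat.exists_eq_add_of_le' hm
  by_contra! hne
  set G : I × ℝ → ℂ := fun p => g (sphericalPoint k (π / 2 * p.1) p.2) with hG
  have hGc : Continuous G := hg.comp (.sphericalPoint k (by fun_prop) continuous_snd)
  obtain ⟨L, hLc, hLexp, hL0⟩ := exists_continuous_log_homotopy hGc (fun _ => hne _)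
    (f := fun _ => log (G (0, 0))) continuous_const
    (fun φ => by simp [hG, exp_log (hne _), sphericalPoint_zero_left k φ])
  have hloop : L (1, 2 * π) = L (1, 0) := by
    have := const_of_exp_const (d := fun s : I => L (s, 2 * π) - L (s, 0)) (by fun_prop)
      (fun a a' => by
        simp only [Complex.exp_sub, hLexp, hG, sphericalPoint_two_pi, div_self (hne _)]) 1 0
    simpa [hL0, sub_eq_zero] using this
  refine ne_of_exp_antiperiodic (ℓ := fun φ => L (1, φ)) (c := π) (by fun_prop) (fun φ => ?_) hloop
  simp only [hLexp, hG, Set.Icc.coe_one, mul_one, sphericalPoint_pi_div_two_add_pi, hodd]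

theorem borsukUlamProperty_sphere_of_injective {m : ℕ} (hm : 2 ≤ m) {Y : Type*}
    [TopologicalSpace Y] {j : Y → ℂ} (hj : Continuous j) (hinj : Function.Injective j) :
    BorsukUlamProperty (Sph m) (antipodal m) Y := by
  intro f hf
  obtain ⟨x, hx⟩ := exists_eq_zero_of_odd hm (g := fun x => j (f (-x)) - j (f x)) (by fun_prop)
    fun x => by simp only [neg_neg, neg_sub]
  exact ⟨x, hinj (sub_eq_zero.mp hx)⟩

theorem stmt_11_general {Γ : Type*} [TopologicalSpace Γ] [T2Space Γ]
    (hplanar : ∃ e : Γ → EuclideanSpace ℝ (Fin 2), Topology.IsEmbedding e)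
    [PathConnectedSpace (Conf2 Γ)] :
    (∀ m : ℕ, 2 ≤ m → BorsukUlamProperty (Sph m) (antipodal m) Γ) ∧
    secat (confQuotMk Γ) = 2 := by
  obtain ⟨e, he⟩ := hplanar
  let toComplex := Complex.orthonormalBasisOneI.repr.symm
  refine ⟨fun m hm => borsukUlamProperty_sphere_of_injective hm (j := toComplex ∘ e)
      (toComplex.continuous.comp he.continuous) (toComplex.injective.comp he.injective),
    le_antisymm ?_ two_le_secat_confQuotMk⟩
  exact_mod_cast secat_confQuotMk_le_of_injective he.continuous he.injective

/-- for a planar graph `Γ` (a Hausdorff space carrying a CW structure of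
dimension at most 1 and embeddable in the plane) with `F(Γ,2)` path-connected,
`((Sᵐ,A);Γ)` satisfies the BUP for all `m ≥ 2`, and `secat (q^Γ) = 2`. -/
theorem stmt_11 {Γ : Type*} [TopologicalSpace Γ] [T2Space Γ]
    (S : CWStructure Γ) (hgraph : S.DimLE 1)
    (hplanar : ∃ e : Γ → EuclideanSpace ℝ (Fin 2), Topology.IsEmbedding e)
    [PathConnectedSpace (Conf2 Γ)] :
    (∀ m : ℕ, 2 ≤ m → BorsukUlamProperty (Sph m) (antipodal m) Γ) ∧
    secat (confQuotMk Γ) = 2 :=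
  stmt_11_general hplanar
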